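/- For n >= 1, the total number of ties over all parking functions of length n is (n-1)(n+1)^{n-2}. -/

import Mathlib

/-- A parking function of length `n` as a word in `[n]^n` (0-indexed values): its
weakly increasing rearrangement `b` satisfies `b i ≤ i` (0-indexed). -/
def IsPF (n : ℕ) (α : Fin n → Fin n) : Prop :=
  ∃ σ : Equiv.Perm (Fin n),
    (∀ i j : Fin n, i ≤ j → α (σ i) ≤ α (σ j)) ∧
    ∀ i : Fin n, (α (σ i) : ℕ) ≤ (i : ℕ)

instance (n : ℕ) : DecidablePred (IsPF n) := fun _ => by unfold IsPF; infer_instance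

/-- The number of ties of a word: indices `i ∈ [n-1]` with `w i = w (i+1)`. -/
def tieCount (n : ℕ) (w : Fin n → Fin n) : ℕ :=
  (Finset.univ.filter
    (fun p : Fin n × Fin n => (p.1 : ℕ) + 1 = (p.2 : ℕ) ∧ w p.1 = w p.2)).card

/-!
Exchanging sums, the total number of ties is the sum, over the `n - 1` adjacent pairs `(p, q)`,
of the number of parking functions with `α p = α q`. Pollak's cyclic argument counts these:
every word `w` over `ZMod (n + 1)` has exactly one diagonal shift `w - x` that is a parking
function, and ties are shift invariant, so there are `(n + 1) ^ (n - 1) / (n + 1)` of them.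

The shift is unique because the potential `N * visits w a - n * a` (`N = n + 1`) is `N`-periodic
in `a` and congruent to `a` modulo `N`, hence takes distinct values on a period, and `w - a` is a
parking function exactly when `a` is its strict minimum.
-/

open Finset

variable {n : ℕ}

lemma card_filter_comp_perm {α : Type*} [Fintype α] (p : α → Prop) [DecidablePred p]
    (σ : Equiv.Perm α) : #{k | p (σ k)} = #{j | p j} := by
  simpa using card_equiv σ (s := {k | p (σ k)}) (t := {j | p j}) (by simp)

lemma Monotone.lt_card_filter_le_iff {β : Type*} [LinearOrder β] {f : Fin n → β}
    (hf : Monotone f) (i : Fin n) (c : β) : (i : ℕ) < #{k | f k ≤ c} ↔ f i ≤ c := by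
  constructor
  · intro hi
    by_contra! hc
    have hsub : ({k | f k ≤ c} : Finset (Fin n)) ⊆ Iio i := fun k hk =>
      mem_Iio.2 (lt_of_not_ge fun hik => (hc.trans_le (hf hik)).not_ge (mem_filter.1 hk).2)
    simpa using hi.trans_le (card_le_card hsub)
  · intro hc
    have hsub : Iic i ⊆ ({k | f k ≤ c} : Finset (Fin n)) := fun k hk =>
      mem_filter.2 ⟨mem_univ k, (hf (mem_Iic.1 hk)).trans hc⟩
    simpa using card_le_card hsub

lemma isPF_iff_lt_card_filter_le (α : Fin n → Fin n) :
    IsPF n α ↔ ∀ i : Fin n, (i : ℕ) < #{j | (α j : ℕ) ≤ i} := by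
  constructor
  · rintro ⟨σ, hσ, hle⟩ i
    have hmono : Monotone fun k => (α (σ k) : ℕ) := fun _ _ h => hσ _ _ h
    rw [← card_filter_comp_perm (fun j => (α j : ℕ) ≤ i) σ, hmono.lt_card_filter_le_iff]
    exact hle i
  · intro h
    set σ := Tuple.sort α
    have hmono : Monotone fun k => (α (σ k) : ℕ) := fun _ _ hij => Tuple.monotone_sort α hij
    refine ⟨σ, fun _ _ hij => Tuple.monotone_sort α hij, fun i => ?_⟩
    rw [← hmono.lt_card_filter_le_iff, card_filter_comp_perm (fun j => (α j : ℕ) ≤ i) σ]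
    exact h i

def IsParkingWord (w : Fin n → ZMod (n + 1)) : Prop :=
  ∀ i < n, i < #{j | (w j).val ≤ i}

lemma IsParkingWord.val_lt {w : Fin n → ZMod (n + 1)} (hw : IsParkingWord w) (j : Fin n) :
    (w j).val < n := by
  have hn := j.pos
  have hcard : #{j | (w j).val ≤ n - 1} = #(univ : Finset (Fin n)) := by
    have := hw (n - 1) (by omega)
    exact le_antisymm (card_le_univ _) (by simp only [card_univ, Fintype.card_fin]; omega)
  have := card_filter_eq_iff.1 hcard j (mem_univ j)
  omega

def toZModWord (α : Fin n → Fin n) : Fin n → ZMod (n + 1) :=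
  fun j => (α j : ℕ)

lemma val_toZModWord (α : Fin n → Fin n) (j : Fin n) : (toZModWord α j).val = α j :=
  ZMod.val_natCast_of_lt (Nat.lt_succ_of_lt (α j).isLt)

lemma toZModWord_apply_eq_iff (α : Fin n → Fin n) (j k : Fin n) :
    toZModWord α j = toZModWord α k ↔ α j = α k := by
  rw [← (ZMod.val_injective _).eq_iff, val_toZModWord, val_toZModWord, Fin.val_inj]

lemma isPF_iff_isParkingWord (α : Fin n → Fin n) :
    IsPF n α ↔ IsParkingWord (toZModWord α) := by
  simp only [isPF_iff_lt_card_filter_le, IsParkingWord, val_toZModWord, Fin.forall_iff]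

section Visits

variable {ι : Type*} [Fintype ι] {N : ℕ} [NeZero N]

lemma card_filter_range_natCast_add_eq (a : ℕ) {k : ℕ} (hk : k ≤ N) (x : ZMod N) :
    #{i ∈ range k | ((a + i : ℕ) : ZMod N) = x} = if (x - a).val < k then 1 else 0 := by
  have hfilter :
      {i ∈ range k | ((a + i : ℕ) : ZMod N) = x} = {i ∈ range k | i = (x - a).val} := by
    refine filter_congr fun i hi => ?_
    have hiN : i < N := (mem_range.1 hi).trans_le hk
    rw [Nat.cast_add, ← eq_sub_iff_add_eq']
    constructor
    · intro h
      rw [← h, ZMod.val_natCast_of_lt hiN]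
    · rintro rfl
      exact ZMod.natCast_zmod_val _
  simp only [hfilter, filter_eq', mem_range]
  split_ifs <;> rfl

def visits (w : ι → ZMod N) (a : ℕ) : ℕ :=
  ∑ j, #{i ∈ range a | ((i : ℕ) : ZMod N) = w j}

lemma visits_add (w : ι → ZMod N) (a : ℕ) {k : ℕ} (hk : k ≤ N) :
    visits w (a + k) = visits w a + #{j | (w j - a).val < k} := by
  simp only [visits, card_filter, sum_range_add, sum_add_distrib]
  congr 1
  refine sum_congr rfl fun j _ => ?_
  rw [← card_filter, card_filter_range_natCast_add_eq a hk]

lemma visits_add_modulus (w : ι → ZMod N) (a : ℕ) :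
    visits w (a + N) = visits w a + Fintype.card ι := by
  simp [visits_add w a le_rfl, ZMod.val_lt]

def potential (w : ι → ZMod N) (a : ℕ) : ℤ :=
  N * visits w a - Fintype.card ι * a

lemma potential_periodic (w : ι → ZMod N) : Function.Periodic (potential w) N := fun a => by
  simp only [potential, visits_add_modulus]
  push_cast
  ring

lemma natCast_potential (w : ι → ZMod N) (hN : Fintype.card ι + 1 = N) (a : ℕ) :
    ((potential w a : ℤ) : ZMod N) = a := by
  have hcard : ((Fintype.card ι : ℕ) : ZMod N) = -1 := by
    rw [eq_neg_iff_add_eq_zero]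
    subst hN
    exact_mod_cast ZMod.natCast_self _
  simp [potential, hcard]

end Visits

lemma ZMod.forall_ne_iff_forall_add_succ (x : ZMod (n + 1)) (P : ZMod (n + 1) → Prop) :
    (∀ y ≠ x, P y) ↔ ∀ i < n, P (x + (i + 1 : ℕ)) := by
  constructor
  · intro h i hi
    refine h _ fun heq => ?_
    have hval := congrArg ZMod.val (add_eq_left.1 heq)
    rw [ZMod.val_natCast_of_lt (Nat.succ_lt_succ hi), ZMod.val_zero] at hval
    exact Nat.succ_ne_zero i hval
  · intro h y hy
    have hval : (y - x).val ≠ 0 := by rwa [ne_eq, ZMod.val_eq_zero, sub_eq_zero]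
    have hlt := ZMod.val_lt (y - x)
    simpa [Nat.sub_add_cancel (Nat.one_le_iff_ne_zero.2 hval), ZMod.natCast_zmod_val] using
      h ((y - x).val - 1) (by omega)

lemma Function.Injective.existsUnique_forall_ne_lt {α β : Type*} [Finite α] [Nonempty α]
    [LinearOrder β] {f : α → β} (hf : Function.Injective f) :
    ∃! x, ∀ y ≠ x, f x < f y := by
  obtain ⟨x, hx⟩ := Finite.exists_min f
  refine ⟨x, fun y hy => (hx y).lt_of_ne (hf.ne hy.symm), fun z hz => ?_⟩
  by_contra hzx
  exact (hz x (Ne.symm hzx)).not_ge (hx z)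

lemma isParkingWord_sub_natCast_iff (w : Fin n → ZMod (n + 1)) (a : ℕ) :
    IsParkingWord (fun j => w j - a) ↔ ∀ i < n, potential w a < potential w (a + (i + 1)) := by
  refine forall₂_congr fun i hi => ?_
  have hvisits : visits w (a + (i + 1)) = visits w a + #{j | (w j - a).val ≤ i} := by
    simp only [visits_add w a (Nat.succ_le_succ hi.le), Nat.lt_succ_iff]
  -- the potential increases by `(n + 1) * #S - n * (i + 1)`, which (as `i < n`) is positive
  -- exactly when `i < #S`
  simp only [potential, hvisits, Fintype.card_fin]
  push_cast
  have hn : (0 : ℤ) ≤ n := Int.natCast_nonneg n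
  constructor
  · intro h
    have h' : (i : ℤ) + 1 ≤ #{j | (w j - a).val ≤ i} := by exact_mod_cast h
    nlinarith [mul_le_mul_of_nonneg_left h' hn]
  · intro h
    by_contra! h'
    have h'' : ((#{j | (w j - a).val ≤ i} : ℕ) : ℤ) ≤ i := by exact_mod_cast h'
    have hi' : (i : ℤ) < n := by exact_mod_cast hi
    nlinarith [mul_le_mul_of_nonneg_left h'' hn]

theorem existsUnique_isParkingWord_sub (w : Fin n → ZMod (n + 1)) :
    ∃! x : ZMod (n + 1), IsParkingWord (fun j => w j - x) := by
  set ψ : ZMod (n + 1) → ℤ := fun x => potential w x.val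
  have hψ (a : ℕ) : potential w a = ψ a := by
    simp only [ψ, ZMod.val_natCast, (potential_periodic w).map_mod_nat]
  have hinj : Function.Injective ψ := fun x y h => by
    simpa only [ψ, natCast_potential w (by rw [Fintype.card_fin]), ZMod.natCast_zmod_val] using
      congrArg (Int.cast : ℤ → ZMod (n + 1)) h
  have hchar (x : ZMod (n + 1)) :
      IsParkingWord (fun j => w j - x) ↔ ∀ y ≠ x, ψ x < ψ y := by
    rw [ZMod.forall_ne_iff_forall_add_succ, ← ZMod.natCast_zmod_val x,
      isParkingWord_sub_natCast_iff]
    refine forall₂_congr fun i _ => ?_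
    rw [hψ (x.val + (i + 1)), Nat.cast_add x.val, ZMod.natCast_zmod_val]
  simpa only [hchar] using hinj.existsUnique_forall_ne_lt

lemma exists_isPF_add (w : Fin n → ZMod (n + 1)) :
    ∃ α x, IsPF n α ∧ w = fun j => toZModWord α j + x := by
  obtain ⟨x, hx, -⟩ := existsUnique_isParkingWord_sub w
  have hα : toZModWord (fun j => ⟨(w j - x).val, hx.val_lt j⟩) = fun j => w j - x :=
    funext fun j => ZMod.natCast_zmod_val (w j - x)
  refine ⟨fun j => ⟨(w j - x).val, hx.val_lt j⟩, x, ?_, ?_⟩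
  · rwa [isPF_iff_isParkingWord, hα]
  · simp only [hα, sub_add_cancel]

lemma eq_and_eq_of_isPF_of_add_eq {α β : Fin n → Fin n} {x y : ZMod (n + 1)} (hα : IsPF n α)
    (hβ : IsPF n β) (h : (fun j => toZModWord α j + x) = fun j => toZModWord β j + y) :
    α = β ∧ x = y := by
  rw [isPF_iff_isParkingWord] at hα hβ
  have hxy : x = y := (existsUnique_isParkingWord_sub fun j => toZModWord α j + x).unique
    (by simpa using hα) (by simpa [congrFun h] using hβ)
  subst hxy
  refine ⟨funext fun j => Fin.ext ?_, rfl⟩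
  simpa [val_toZModWord] using congrArg ZMod.val (add_right_cancel (congrFun h j))

lemma card_filter_isPF_and_apply_eq_mul (p q : Fin n) :
    #{α | IsPF n α ∧ α p = α q} * (n + 1) = #{w : Fin n → ZMod (n + 1) | w p = w q} := by
  have hcard : #(({α | IsPF n α ∧ α p = α q} : Finset (Fin n → Fin n)) ×ˢ
      (univ : Finset (ZMod (n + 1)))) = #{α | IsPF n α ∧ α p = α q} * (n + 1) := by
    rw [card_product, card_univ, ZMod.card]
  rw [← hcard]
  refine card_nbij (fun pr j => toZModWord pr.1 j + pr.2) ?_ ?_ ?_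
  · rintro ⟨α, x⟩ h
    simp only [mem_coe, mem_product, mem_filter, mem_univ, true_and, and_true] at h
    simp [toZModWord, h.2]
  · rintro ⟨α, x⟩ h ⟨β, y⟩ h' heq
    simp only [mem_coe, mem_product, mem_filter, mem_univ, true_and, and_true] at h h'
    obtain ⟨rfl, rfl⟩ := eq_and_eq_of_isPF_of_add_eq h.1 h'.1 heq
    rfl
  · intro w hw
    obtain ⟨α, x, hα, rfl⟩ := exists_isPF_add w
    simp only [mem_coe, mem_filter, mem_univ, true_and, add_left_inj,
      toZModWord_apply_eq_iff] at hw
    exact ⟨(α, x), by simp [hα, hw], rfl⟩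

lemma card_filter_apply_eq_apply {ι α : Type*} [Fintype ι] [DecidableEq ι] [Fintype α]
    [DecidableEq α] {p q : ι} (hpq : p ≠ q) :
    #{w : ι → α | w p = w q} = Fintype.card α ^ (Fintype.card ι - 1) := by
  let e : {w : ι → α // w p = w q} ≃ ({j // j ≠ q} → α) :=
    { toFun := fun w j => w.1 j
      invFun := fun g =>
        ⟨fun j => if h : j = q then g ⟨p, hpq⟩ else g ⟨j, h⟩, by simp [hpq]⟩
      left_inv := fun w => Subtype.ext (funext fun j => by by_cases h : j = q <;> simp [h, w.2])
      right_inv := fun g => funext fun j => by simp [j.2] }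
  rw [← Fintype.card_subtype, Fintype.card_congr e, Fintype.card_fun, Fintype.card_subtype_compl,
    Fintype.card_subtype_eq]

lemma card_filter_isPF_and_apply_eq {p q : Fin n} (hpq : p ≠ q) :
    #{α | IsPF n α ∧ α p = α q} = (n + 1) ^ (n - 2) := by
  have h := card_filter_isPF_and_apply_eq_mul p q
  rw [card_filter_apply_eq_apply hpq, ZMod.card, Fintype.card_fin] at h
  have hn : 2 ≤ n := by
    have := Fin.val_ne_of_ne hpq
    omega
  rw [show n - 1 = n - 2 + 1 by omega, pow_succ] at h
  exact Nat.eq_of_mul_eq_mul_right n.succ_pos h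

lemma card_filter_val_add_one_eq_val (n : ℕ) :
    #{p : Fin n × Fin n | (p.1 : ℕ) + 1 = p.2} = n - 1 := by
  rw [← card_range (n - 1)]
  refine card_nbij (fun p => (p.1 : ℕ)) ?_ ?_ ?_
  · rintro ⟨a, b⟩ h
    simp only [coe_filter, Set.mem_ofPred_eq, coe_range, Set.mem_Iio] at h ⊢
    omega
  · rintro ⟨a, b⟩ h ⟨c, d⟩ h' hac
    simp only [coe_filter, Set.mem_ofPred_eq] at h h' hac
    ext <;> simp <;> omega
  · intro m hm
    simp only [coe_range, Set.mem_Iio] at hm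
    exact ⟨(⟨m, by omega⟩, ⟨m + 1, by omega⟩), by simp, rfl⟩

theorem total_ties_parking_functions_general (n : ℕ) :
    ∑ α ∈ Finset.univ.filter (fun α : Fin n → Fin n => IsPF n α), tieCount n α =
      (n - 1) * (n + 1) ^ (n - 2) := by
  set adjacent : Finset (Fin n × Fin n) := {p | (p.1 : ℕ) + 1 = p.2}
  set tie : (Fin n → Fin n) → Fin n × Fin n → Prop := fun α p => α p.1 = α p.2
  have htie (α : Fin n → Fin n) : tieCount n α = #(adjacent.bipartiteAbove tie α) := by
    simp only [tieCount, bipartiteAbove, filter_filter, adjacent, tie]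
  calc ∑ α ∈ univ.filter (IsPF n), tieCount n α
      = ∑ p ∈ adjacent, #((univ.filter (IsPF n)).bipartiteBelow tie p) := by
        simp only [htie, sum_card_bipartiteAbove_eq_sum_card_bipartiteBelow]
    _ = ∑ p ∈ adjacent, (n + 1) ^ (n - 2) := by
        refine sum_congr rfl fun p hp => ?_
        have hpq : p.1 ≠ p.2 := fun h => by simp [adjacent, h] at hp
        rw [bipartiteBelow, filter_filter, card_filter_isPF_and_apply_eq hpq]
    _ = (n - 1) * (n + 1) ^ (n - 2) := by
        rw [sum_const, smul_eq_mul, card_filter_val_add_one_eq_val]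

/-- For `n ≥ 1`, the total number of ties over all parking functions of length `n`
is `(n-1)(n+1)^(n-2)`. -/
theorem total_ties_parking_functions (n : ℕ) (hn : 1 ≤ n) :
    ∑ α ∈ Finset.univ.filter (fun α : Fin n → Fin n => IsPF n α), tieCount n α =
      (n - 1) * (n + 1) ^ (n - 2) :=
  total_ties_parking_functions_general n
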